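/- For any n×n complex matrices A, B and 1 ≤ k ≤ n, ∑_{i=1}^k σᵢ(A+B) ≥ max over subsets {i₁ < ... < i_k} ⊆ {1,...,n} of ∑_{l=1}^k |σ_{i_l}(A) − σ_{i_l}(B)|. -/

import Mathlib

open Matrix Finset

namespace SVP

variable {N : ℕ}

/-- real quadratic form of a matrix -/
noncomputable def qf (M : Matrix (Fin N) (Fin N) ℂ) (x : Fin N → ℂ) : ℝ :=
  (star x ⬝ᵥ (M *ᵥ x)).re

/-- squared norm -/
noncomputable def nsq (x : Fin N → ℂ) : ℝ := (star x ⬝ᵥ x).re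

lemma star_dot_self (x : Fin N → ℂ) :
    star x ⬝ᵥ x = ((∑ i, Complex.normSq (x i) : ℝ) : ℂ) := by
  simp only [dotProduct, Pi.star_apply, Complex.ofReal_sum]
  refine Finset.sum_congr rfl fun i _ => ?_
  rw [Complex.normSq_eq_conj_mul_self]
  rfl

lemma nsq_eq (x : Fin N → ℂ) : nsq x = ∑ i, Complex.normSq (x i) := by
  rw [nsq, star_dot_self, Complex.ofReal_re]

lemma nsq_nonneg (x : Fin N → ℂ) : 0 ≤ nsq x := by
  rw [nsq_eq]; exact Finset.sum_nonneg fun i _ => Complex.normSq_nonneg _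

lemma nsq_pos {x : Fin N → ℂ} (hx : x ≠ 0) : 0 < nsq x := by
  rcases Function.ne_iff.1 hx with ⟨i, hi⟩
  rw [nsq_eq]
  exact Finset.sum_pos' (fun j _ => Complex.normSq_nonneg _)
    ⟨i, Finset.mem_univ i, by simpa using Complex.normSq_pos.2 hi⟩

lemma qf_add (M₁ M₂ : Matrix (Fin N) (Fin N) ℂ) (x : Fin N → ℂ) :
    qf (M₁ + M₂) x = qf M₁ x + qf M₂ x := by
  simp [qf, Matrix.add_mulVec, dotProduct_add]

lemma qf_neg (M : Matrix (Fin N) (Fin N) ℂ) (x : Fin N → ℂ) :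
    qf (-M) x = -qf M x := by
  simp [qf, Matrix.neg_mulVec, dotProduct_neg]

lemma qf_smul_one (c : ℝ) (x : Fin N → ℂ) :
    qf ((c : ℂ) • (1 : Matrix (Fin N) (Fin N) ℂ)) x = c * nsq x := by
  rw [qf, Matrix.smul_mulVec, Matrix.one_mulVec, dotProduct_smul,
    smul_eq_mul, star_dot_self, ← Complex.ofReal_mul, Complex.ofReal_re, nsq_eq]

/-- expansion of dot products over an orthonormal family -/
lemma sum_dot {ι : Type*} [Fintype ι] (f : ι → Fin N → ℂ) (w : Fin N → ℂ) :
    (∑ s, f s) ⬝ᵥ w = ∑ s, f s ⬝ᵥ w := by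
  simp only [dotProduct, Finset.sum_apply, Finset.sum_mul]
  exact Finset.sum_comm

lemma dot_sum {ι : Type*} [Fintype ι] (w : Fin N → ℂ) (f : ι → Fin N → ℂ) :
    w ⬝ᵥ (∑ s, f s) = ∑ s, w ⬝ᵥ f s := by
  simp only [dotProduct, Finset.sum_apply, Finset.mul_sum]
  exact Finset.sum_comm

lemma dot_expand {ι : Type*} [Fintype ι] [DecidableEq ι] (u : ι → Fin N → ℂ)
    (hu : ∀ s t, star (u s) ⬝ᵥ u t = if s = t then 1 else 0)
    (y z : ι → ℂ) :
    star (∑ s, y s • u s) ⬝ᵥ (∑ t, z t • u t) = ∑ t, (starRingEnd ℂ) (y t) * z t := by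
  rw [star_sum, sum_dot]
  have h1 : ∀ s, star (y s • u s) ⬝ᵥ (∑ t, z t • u t)
      = ∑ t, (starRingEnd ℂ) (y s) * z t * (star (u s) ⬝ᵥ u t) := by
    intro s
    rw [dot_sum]
    refine Finset.sum_congr rfl fun t _ => ?_
    rw [star_smul, smul_dotProduct, dotProduct_smul]
    simp [mul_comm, mul_assoc, mul_left_comm]
  simp only [h1, hu, mul_ite, mul_one, mul_zero, Finset.sum_ite_eq', Finset.sum_ite_eq, Finset.mem_univ, if_true]

lemma mulVec_sum_smul {ι : Type*} [Fintype ι] (M : Matrix (Fin N) (Fin N) ℂ)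
    (u : ι → Fin N → ℂ) (y : ι → ℂ) :
    M *ᵥ (∑ t, y t • u t) = ∑ t, y t • (M *ᵥ u t) := by
  rw [← Matrix.mulVecLin_apply, map_sum]
  simp [Matrix.mulVecLin_apply, Matrix.mulVec_smul]

/-- Core lemma A : lower bound for qf on span of orthonormal eigenvectors -/
lemma qf_ge_on_span {M : Matrix (Fin N) (Fin N) ℂ} {ι : Type*} [Fintype ι] [DecidableEq ι]
    (u : ι → Fin N → ℂ)
    (hu : ∀ s t, star (u s) ⬝ᵥ u t = if s = t then 1 else 0)
    (d : ι → ℝ) (hd : ∀ t, M *ᵥ u t = (d t : ℂ) • u t)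
    (c : ℝ) (hc : ∀ t, c ≤ d t) {x : Fin N → ℂ}
    (hx : x ∈ Submodule.span ℂ (Set.range u)) :
    c * nsq x ≤ qf M x := by
  obtain ⟨y, rfl⟩ := (Submodule.mem_span_range_iff_exists_fun ℂ).1 hx
  have hxx : nsq (∑ t, y t • u t) = ∑ t, Complex.normSq (y t) := by
    rw [nsq, dot_expand u hu]
    have e1 : ∀ t, (starRingEnd ℂ) (y t) * y t = ((Complex.normSq (y t) : ℝ) : ℂ) :=
      fun t => by rw [Complex.normSq_eq_conj_mul_self]
    rw [Finset.sum_congr rfl fun t _ => e1 t, ← Complex.ofReal_sum, Complex.ofReal_re]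
  have hMx : M *ᵥ (∑ t, y t • u t) = ∑ t, ((d t : ℂ) * y t) • u t := by
    rw [mulVec_sum_smul]
    refine Finset.sum_congr rfl fun t _ => ?_
    rw [hd t, smul_smul, mul_comm]
  have hq : qf M (∑ t, y t • u t) = ∑ t, d t * Complex.normSq (y t) := by
    rw [qf, hMx, dot_expand u hu]
    have : ∀ t, (starRingEnd ℂ) (y t) * ((d t : ℂ) * y t)
        = ((d t * Complex.normSq (y t) : ℝ) : ℂ) := by
      intro t
      rw [mul_left_comm, ← Complex.normSq_eq_conj_mul_self]
      push_cast; ring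
    rw [Finset.sum_congr rfl fun t _ => this t, ← Complex.ofReal_sum, Complex.ofReal_re]
  rw [hq, hxx, Finset.mul_sum]
  exact Finset.sum_le_sum fun t _ =>
    mul_le_mul_of_nonneg_right (hc t) (Complex.normSq_nonneg _)

/-- the mirrored version -/
lemma qf_le_on_span {M : Matrix (Fin N) (Fin N) ℂ} {ι : Type*} [Fintype ι] [DecidableEq ι]
    (u : ι → Fin N → ℂ)
    (hu : ∀ s t, star (u s) ⬝ᵥ u t = if s = t then 1 else 0)
    (d : ι → ℝ) (hd : ∀ t, M *ᵥ u t = (d t : ℂ) • u t)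
    (c : ℝ) (hc : ∀ t, d t ≤ c) {x : Fin N → ℂ}
    (hx : x ∈ Submodule.span ℂ (Set.range u)) :
    qf M x ≤ c * nsq x := by
  have := qf_ge_on_span (M := -M) u hu (fun t => -(d t))
    (fun t => by rw [Matrix.neg_mulVec, hd t]; push_cast; rw [neg_smul]) (-c)
    (fun t => neg_le_neg (hc t)) hx
  rw [qf_neg, neg_mul] at this
  linarith

/-- Core lemma C : dimension of a span of an orthonormal family -/
lemma finrank_span_ortho {ι : Type*} [Fintype ι] [DecidableEq ι] (u : ι → Fin N → ℂ)
    (hu : ∀ s t, star (u s) ⬝ᵥ u t = if s = t then 1 else 0) :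
    Module.finrank ℂ (Submodule.span ℂ (Set.range u)) = Fintype.card ι := by
  refine finrank_span_eq_card (Fintype.linearIndependent_iff.2 fun g hg i => ?_)
  have h0 : star (u i) ⬝ᵥ (∑ t, g t • u t) = g i := by
    rw [dot_sum]
    have h2 : ∀ t, star (u i) ⬝ᵥ (g t • u t) = g t * (star (u i) ⬝ᵥ u t) := fun t => by
      rw [dotProduct_smul]; simp
    simp only [h2, hu, mul_ite, mul_one, mul_zero, Finset.sum_ite_eq', Finset.sum_ite_eq, Finset.mem_univ, if_true]
  rw [hg] at h0
  simpa using h0.symm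

/-- Core lemma B : comparing bounds on two big subspaces -/
lemma le_of_subspaces {M : Matrix (Fin N) (Fin N) ℂ} {c c' : ℝ}
    {V W : Submodule ℂ (Fin N → ℂ)}
    (hdim : N < Module.finrank ℂ V + Module.finrank ℂ W)
    (hV : ∀ x ∈ V, c * nsq x ≤ qf M x)
    (hW : ∀ x ∈ W, qf M x ≤ c' * nsq x) : c ≤ c' := by
  have hfin : 0 < Module.finrank ℂ ↥(V ⊓ W) := by
    have h1 := Submodule.finrank_sup_add_finrank_inf_eq V W
    have h2 : Module.finrank ℂ ↥(V ⊔ W) ≤ N := by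
      have h3 := Submodule.finrank_le (V ⊔ W)
      rwa [Module.finrank_pi, Fintype.card_fin] at h3
    omega
  have : Nontrivial ↥(V ⊓ W) := Module.finrank_pos_iff.1 hfin
  obtain ⟨⟨x, hxVW⟩, hx0⟩ := exists_ne (0 : ↥(V ⊓ W))
  have hx : x ≠ 0 := by
    intro h; exact hx0 (Subtype.ext h)
  have h1 := hV x hxVW.1
  have h2 := hW x hxVW.2
  have h3 : (0:ℝ) < nsq x := nsq_pos hx
  nlinarith



/-! ### Sorted eigenvalues -/

variable {M : Matrix (Fin N) (Fin N) ℂ}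

/-- permutation sorting eigenvalues in decreasing order -/
noncomputable def sperm (hM : M.IsHermitian) : Equiv.Perm (Fin N) :=
  Fin.revPerm.trans (Tuple.sort hM.eigenvalues)

/-- eigenvalues in decreasing order -/
noncomputable def mu (hM : M.IsHermitian) : Fin N → ℝ := fun i => hM.eigenvalues (sperm hM i)

lemma mu_antitone (hM : M.IsHermitian) : Antitone (mu hM) := by
  intro i j hij
  have h := Tuple.monotone_sort hM.eigenvalues (Fin.rev_le_rev.2 hij)
  simpa [mu, sperm] using h

/-- the sorted eigenvector family -/
noncomputable def Bfam (hM : M.IsHermitian) : Fin N → (Fin N → ℂ) := fun j =>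
  (WithLp.equiv 2 _) (hM.eigenvectorBasis (sperm hM j))

lemma Bfam_ortho (hM : M.IsHermitian) :
    ∀ s t, star (Bfam hM s) ⬝ᵥ Bfam hM t = if s = t then 1 else 0 := by
  intro s t
  have h := orthonormal_iff_ite.1 hM.eigenvectorBasis.orthonormal (sperm hM s) (sperm hM t)
  rw [EuclideanSpace.inner_eq_star_dotProduct] at h
  rw [Bfam, Bfam, WithLp.equiv_apply, WithLp.equiv_apply, dotProduct_comm, h]
  simp [Equiv.apply_eq_iff_eq]

lemma Bfam_eig (hM : M.IsHermitian) (j : Fin N) :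
    M *ᵥ Bfam hM j = ((mu hM j : ℝ) : ℂ) • Bfam hM j := by
  have h := hM.mulVec_eigenvectorBasis (sperm hM j)
  rw [Bfam, mu, WithLp.equiv_apply, h]
  funext i
  simp [Complex.real_smul]

/-! ### restricted families and spans -/

lemma restrict_ortho {u : Fin N → Fin N → ℂ}
    (hu : ∀ s t, star (u s) ⬝ᵥ u t = if s = t then 1 else 0) (T : Finset (Fin N)) :
    ∀ s t : ↥T, star (u ↑s) ⬝ᵥ u ↑t = if s = t then 1 else 0 := by
  intro s t
  rw [hu]
  simp [Subtype.coe_inj]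

lemma finrank_restrict_span {u : Fin N → Fin N → ℂ}
    (hu : ∀ s t, star (u s) ⬝ᵥ u t = if s = t then 1 else 0) (T : Finset (Fin N)) :
    Module.finrank ℂ (Submodule.span ℂ (Set.range (fun t : ↥T => u ↑t))) = T.card := by
  rw [finrank_span_ortho _ (restrict_ortho hu T), Fintype.card_coe]

/-- Courant-Fischer : lower bound via a subspace -/
lemma cf_le (hM : M.IsHermitian) (i : Fin N) (V : Submodule ℂ (Fin N → ℂ)) (c : ℝ)
    (hdim : (i : ℕ) + 1 ≤ Module.finrank ℂ V)
    (hV : ∀ x ∈ V, c * nsq x ≤ qf M x) : c ≤ mu hM i := by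
  classical
  refine le_of_subspaces (M := M) (W := Submodule.span ℂ
    (Set.range (fun t : ↥(Finset.Ici i) => Bfam hM ↑t))) ?_ hV ?_
  · rw [finrank_restrict_span (Bfam_ortho hM), Fin.card_Ici]
    have := i.isLt; omega
  · intro x hx
    refine qf_le_on_span _ (restrict_ortho (Bfam_ortho hM) _) (fun t => mu hM ↑t)
      (fun t => Bfam_eig hM ↑t) (mu hM i) (fun t => mu_antitone hM (Finset.mem_Ici.1 t.2)) hx

/-- Courant-Fischer : upper bound via a subspace -/
lemma cf_ge (hM : M.IsHermitian) (i : Fin N) (W : Submodule ℂ (Fin N → ℂ)) (c : ℝ)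
    (hdim : N ≤ Module.finrank ℂ W + (i : ℕ))
    (hW : ∀ x ∈ W, qf M x ≤ c * nsq x) : mu hM i ≤ c := by
  classical
  refine le_of_subspaces (M := M) (V := Submodule.span ℂ
    (Set.range (fun t : ↥(Finset.Iic i) => Bfam hM ↑t))) ?_ ?_ hW
  · rw [finrank_restrict_span (Bfam_ortho hM), Fin.card_Iic]
    omega
  · intro x hx
    refine qf_ge_on_span _ (restrict_ortho (Bfam_ortho hM) _) (fun t => mu hM ↑t)
      (fun t => Bfam_eig hM ↑t) (mu hM i) (fun t => mu_antitone hM (Finset.mem_Iic.1 t.2)) hx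

/-- Weyl monotonicity -/
lemma weyl {G H : Matrix (Fin N) (Fin N) ℂ} (hG : G.IsHermitian) (hH : H.IsHermitian)
    (hpos : ∀ x, 0 ≤ qf (G - H) x) (i : Fin N) : mu hH i ≤ mu hG i := by
  classical
  refine cf_le hG i (Submodule.span ℂ
    (Set.range (fun t : ↥(Finset.Iic i) => Bfam hH ↑t))) _ ?_ ?_
  · rw [finrank_restrict_span (Bfam_ortho hH), Fin.card_Iic]
  · intro x hx
    have h1 : mu hH i * nsq x ≤ qf H x :=
      qf_ge_on_span _ (restrict_ortho (Bfam_ortho hH) _) (fun t => mu hH ↑t)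
        (fun t => Bfam_eig hH ↑t) (mu hH i) (fun t => mu_antitone hH (Finset.mem_Iic.1 t.2)) hx
    have h2 : qf G x = qf H x + qf (G - H) x := by
      rw [← qf_add]; congr 1; abel
    rw [h2]
    have := hpos x
    linarith

lemma herm_smul_one (c : ℝ) : ((c : ℂ) • (1 : Matrix (Fin N) (Fin N) ℂ)).IsHermitian := by
  unfold Matrix.IsHermitian
  rw [Matrix.conjTranspose_smul, Matrix.conjTranspose_one]
  simp

/-- eigenvalue shift -/
lemma mu_shift (hM : M.IsHermitian) (c : ℝ)
    (hMc : (M + (c : ℂ) • (1 : Matrix (Fin N) (Fin N) ℂ)).IsHermitian) (i : Fin N) :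
    mu hMc i = mu hM i + c := by
  classical
  have key : ∀ x : Fin N → ℂ, qf (M + (c : ℂ) • 1) x = qf M x + c * nsq x := by
    intro x; rw [qf_add, qf_smul_one]
  refine le_antisymm ?_ ?_
  · refine cf_ge hMc i (Submodule.span ℂ
      (Set.range (fun t : ↥(Finset.Ici i) => Bfam hM ↑t))) _ ?_ ?_
    · rw [finrank_restrict_span (Bfam_ortho hM), Fin.card_Ici]
      have := i.isLt; omega
    · intro x hx
      have h1 : qf M x ≤ mu hM i * nsq x :=
        qf_le_on_span _ (restrict_ortho (Bfam_ortho hM) _) (fun t => mu hM ↑t)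
          (fun t => Bfam_eig hM ↑t) (mu hM i) (fun t => mu_antitone hM (Finset.mem_Ici.1 t.2)) hx
      rw [key, add_mul]
      linarith
  · refine cf_le hMc i (Submodule.span ℂ
      (Set.range (fun t : ↥(Finset.Iic i) => Bfam hM ↑t))) _ ?_ ?_
    · rw [finrank_restrict_span (Bfam_ortho hM), Fin.card_Iic]
    · intro x hx
      have h1 : mu hM i * nsq x ≤ qf M x :=
        qf_ge_on_span _ (restrict_ortho (Bfam_ortho hM) _) (fun t => mu hM ↑t)
          (fun t => Bfam_eig hM ↑t) (mu hM i) (fun t => mu_antitone hM (Finset.mem_Iic.1 t.2)) hx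
      rw [key, add_mul]
      linarith

/-- identification of sorted eigenvalues from an antitone orthonormal eigenfamily -/
lemma mu_ident (hM : M.IsHermitian) (u : Fin N → Fin N → ℂ) (d : Fin N → ℝ)
    (hu : ∀ s t, star (u s) ⬝ᵥ u t = if s = t then 1 else 0)
    (heig : ∀ t, M *ᵥ u t = (d t : ℂ) • u t) (hd : Antitone d) (i : Fin N) :
    mu hM i = d i := by
  classical
  refine le_antisymm ?_ ?_
  · refine cf_ge hM i (Submodule.span ℂ
      (Set.range (fun t : ↥(Finset.Ici i) => u ↑t))) _ ?_ ?_
    · rw [finrank_restrict_span hu, Fin.card_Ici]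
      have := i.isLt; omega
    · intro x hx
      exact qf_le_on_span _ (restrict_ortho hu _) (fun t => d ↑t)
        (fun t => heig ↑t) (d i) (fun t => hd (Finset.mem_Ici.1 t.2)) hx
  · refine cf_le hM i (Submodule.span ℂ
      (Set.range (fun t : ↥(Finset.Iic i) => u ↑t))) _ ?_ ?_
    · rw [finrank_restrict_span hu, Fin.card_Iic]
    · intro x hx
      exact qf_ge_on_span _ (restrict_ortho hu _) (fun t => d ↑t)
        (fun t => heig ↑t) (d i) (fun t => hd (Finset.mem_Iic.1 t.2)) hx

/-! ### trace -/

lemma trace_eq_sum_eigs (hM : M.IsHermitian) : M.trace = ((∑ i, hM.eigenvalues i : ℝ) : ℂ) := by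
  conv_lhs => rw [hM.spectral_theorem]
  rw [Unitary.conjStarAlgAut_apply, Matrix.trace_mul_cycle, Unitary.coe_star_mul_self, one_mul, Matrix.trace_diagonal]
  push_cast
  rfl

lemma sum_mu (hM : M.IsHermitian) : ∑ i, mu hM i = M.trace.re := by
  rw [trace_eq_sum_eigs hM, Complex.ofReal_re]
  exact Equiv.sum_comp (sperm hM) hM.eigenvalues

/-! ### conjugated diagonal matrices -/

lemma diag_mulVec (d : Fin N → ℂ) (y : Fin N → ℂ) :
    Matrix.diagonal d *ᵥ y = fun i => d i * y i := by
  funext i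
  simp [Matrix.mulVec, Matrix.diagonal, dotProduct, Finset.sum_ite_eq, ite_mul]

variable {U : Matrix (Fin N) (Fin N) ℂ}

lemma qf_conj_diag (hU : U ∈ Matrix.unitaryGroup (Fin N) ℂ) (f : Fin N → ℝ) (x : Fin N → ℂ) :
    qf (U * Matrix.diagonal (fun i => (f i : ℂ)) * star U) x
      = ∑ i, f i * Complex.normSq ((star U *ᵥ x) i) := by
  set y := star U *ᵥ x with hy
  have h1 : (U * Matrix.diagonal (fun i => (f i : ℂ)) * star U) *ᵥ x
      = U *ᵥ (Matrix.diagonal (fun i => (f i : ℂ)) *ᵥ y) := by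
    rw [Matrix.mulVec_mulVec, Matrix.mulVec_mulVec]
  have h2 : star x ᵥ* U = star y := by
    rw [hy, Matrix.star_mulVec]
    congr 1
    rw [Matrix.star_eq_conjTranspose, Matrix.conjTranspose_conjTranspose]
  rw [qf, h1, Matrix.dotProduct_mulVec, h2, diag_mulVec]
  have h3 : star y ⬝ᵥ (fun i => (f i : ℂ) * y i)
      = ((∑ i, f i * Complex.normSq (y i) : ℝ) : ℂ) := by
    push_cast
    simp only [dotProduct, Pi.star_apply]
    refine Finset.sum_congr rfl fun i _ => ?_
    rw [mul_left_comm]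
    rw [show (star (y i)) * y i = ((Complex.normSq (y i) : ℝ) : ℂ) from by
      rw [Complex.normSq_eq_conj_mul_self]; rfl]
  rw [h3, Complex.ofReal_re]

lemma qf_conj_diag_nonneg (hU : U ∈ Matrix.unitaryGroup (Fin N) ℂ) (f : Fin N → ℝ)
    (hf : ∀ i, 0 ≤ f i) (x : Fin N → ℂ) :
    0 ≤ qf (U * Matrix.diagonal (fun i => (f i : ℂ)) * star U) x := by
  rw [qf_conj_diag hU]
  exact Finset.sum_nonneg fun i _ => mul_nonneg (hf i) (Complex.normSq_nonneg _)

lemma trace_conj_diag (hU : U ∈ Matrix.unitaryGroup (Fin N) ℂ) (f : Fin N → ℝ) :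
    (U * Matrix.diagonal (fun i => (f i : ℂ)) * star U).trace = ((∑ i, f i : ℝ) : ℂ) := by
  rw [Matrix.trace_mul_cycle, Matrix.mem_unitaryGroup_iff'.mp hU, one_mul,
    Matrix.trace_diagonal]
  push_cast
  rfl

lemma herm_conj_diag (f : Fin N → ℝ) :
    (U * Matrix.diagonal (fun i => (f i : ℂ)) * star U).IsHermitian := by
  unfold Matrix.IsHermitian
  rw [Matrix.conjTranspose_mul, Matrix.conjTranspose_mul, Matrix.diagonal_conjTranspose]
  rw [Matrix.star_eq_conjTranspose, Matrix.conjTranspose_conjTranspose]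
  have h1 : star (fun i => (f i : ℂ)) = fun i => (f i : ℂ) := by
    funext i; simp
  rw [h1, mul_assoc]

lemma conj_diag_sub (f g : Fin N → ℝ) :
    (U * Matrix.diagonal (fun i => (f i : ℂ)) * star U)
      - (U * Matrix.diagonal (fun i => (g i : ℂ)) * star U)
      = U * Matrix.diagonal (fun i => ((f i - g i : ℝ) : ℂ)) * star U := by
  rw [← Matrix.sub_mul, ← Matrix.mul_sub, Matrix.diagonal_sub]
  congr 2
  funext i
  push_cast
  ring

lemma spectral_decomp (hM : M.IsHermitian) :
    M = (hM.eigenvectorUnitary : Matrix (Fin N) (Fin N) ℂ) * Matrix.diagonal (fun i => ((hM.eigenvalues i : ℝ) : ℂ))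
        * star (hM.eigenvectorUnitary : Matrix (Fin N) (Fin N) ℂ) := by
  conv_lhs => rw [hM.spectral_theorem]
  rfl

lemma smul_one_decomp (hU : U ∈ Matrix.unitaryGroup (Fin N) ℂ) (c : ℝ) :
    (c : ℂ) • (1 : Matrix (Fin N) (Fin N) ℂ)
      = U * Matrix.diagonal (fun _ => ((c : ℝ) : ℂ)) * star U := by
  rw [← Matrix.smul_one_eq_diagonal, Matrix.mul_smul, Matrix.smul_mul, Matrix.mul_one,
    Matrix.mem_unitaryGroup_iff.mp hU]

/-! ### Lidskii inequality -/

lemma lidskii {G H : Matrix (Fin N) (Fin N) ℂ} (hG : G.IsHermitian) (hH : H.IsHermitian)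
    (hGH : (G - H).IsHermitian) {k : ℕ} (hk1 : 1 ≤ k) (hkN : k ≤ N)
    {S : Finset (Fin N)} (hS : S.card = k) :
    ∑ i ∈ S, (mu hG i - mu hH i) ≤
      ∑ l ∈ Finset.Iic (⟨k - 1, by omega⟩ : Fin N), mu hGH l := by
  classical
  set kk : Fin N := ⟨k - 1, by omega⟩ with hkk
  set c : ℝ := mu hGH kk with hc
  set U : Matrix (Fin N) (Fin N) ℂ := ↑hGH.eigenvectorUnitary with hUdef
  have hU : U ∈ Matrix.unitaryGroup (Fin N) ℂ := hGH.eigenvectorUnitary.2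
  set ev : Fin N → ℝ := hGH.eigenvalues with hev
  set f : Fin N → ℝ := fun i => max (ev i - c) 0 with hf
  set P : Matrix (Fin N) (Fin N) ℂ := U * Matrix.diagonal (fun i => (f i : ℂ)) * star U with hP
  have hPh : P.IsHermitian := herm_conj_diag f
  have hHP : (H + P).IsHermitian := hH.add hPh
  have hHPc : (H + P + (c : ℂ) • 1).IsHermitian := hHP.add (herm_smul_one c)
  have d0 : G - H = U * Matrix.diagonal (fun i => ((ev i : ℝ) : ℂ)) * star U := by
    have h := spectral_decomp hGH
    rw [← hev, ← hUdef] at h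
    exact h
  have d1 : G - H - (c : ℂ) • 1
      = U * Matrix.diagonal (fun i => ((ev i - c : ℝ) : ℂ)) * star U := by
    rw [d0, smul_one_decomp hU c, conj_diag_sub]
  have step1 : ∀ i, mu hG i ≤ mu hHP i + c := by
    intro i
    have hEq : (H + P + (c : ℂ) • 1) - G
        = U * Matrix.diagonal (fun i => ((f i - (ev i - c) : ℝ) : ℂ)) * star U := by
      have e3 : (H + P + (c : ℂ) • 1) - G = P - ((G - H) - (c : ℂ) • 1) := by abel
      rw [e3, d1, hP, conj_diag_sub]
    have kpos : ∀ x, 0 ≤ qf ((H + P + (c : ℂ) • 1) - G) x := by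
      intro x
      rw [hEq]
      exact qf_conj_diag_nonneg hU _ (fun i => sub_nonneg.2 (le_max_left _ _)) x
    have h1 := weyl hHPc hG kpos i
    rwa [mu_shift hHP c hHPc i] at h1
  have step2 : ∀ i, mu hH i ≤ mu hHP i := by
    intro i
    refine weyl hHP hH (fun x => ?_) i
    have e : (H + P) - H = P := by abel
    rw [e, hP]
    exact qf_conj_diag_nonneg hU _ (fun i => le_max_right _ _) x
  have step3 : ∑ i, (mu hHP i - mu hH i) = ∑ i, f i := by
    rw [Finset.sum_sub_distrib, sum_mu hHP, sum_mu hH]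
    have : (H + P).trace = H.trace + P.trace := Matrix.trace_add H P
    rw [this, Complex.add_re, hP, trace_conj_diag hU, Complex.ofReal_re]
    ring
  have hmukk : mu hGH kk = c := rfl
  have step4 : ∑ i, f i = ∑ l ∈ Finset.Iic kk, (mu hGH l - c) := by
    have e1 : ∑ i, f i = ∑ l, f (sperm hGH l) := (Equiv.sum_comp (sperm hGH) f).symm
    have e2 : ∀ l, f (sperm hGH l) = max (mu hGH l - c) 0 := fun l => rfl
    rw [e1, Finset.sum_congr rfl fun l _ => e2 l]
    rw [← Finset.sum_add_sum_compl (Finset.Iic kk)]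
    skip
    have e3 : ∀ l ∈ Finset.Iic kk, max (mu hGH l - c) 0 = mu hGH l - c := by
      intro l hl
      have : c ≤ mu hGH l := hmukk ▸ mu_antitone hGH (Finset.mem_Iic.1 hl)
      rw [max_eq_left (by linarith)]
    have e4 : ∀ l ∈ (Finset.Iic kk)ᶜ, max (mu hGH l - c) 0 = 0 := by
      intro l hl
      have hlk : kk ≤ l :=
        le_of_not_ge (fun h => (Finset.mem_compl.1 hl) (Finset.mem_Iic.2 h))
      have : mu hGH l ≤ c := hmukk ▸ mu_antitone hGH hlk
      rw [max_eq_right (by linarith)]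
    rw [Finset.sum_congr rfl e3, Finset.sum_congr rfl e4, Finset.sum_const_zero, add_zero]
  have cardIic : (Finset.Iic kk).card = k := by
    rw [Fin.card_Iic]
    have : (kk : ℕ) = k - 1 := rfl
    omega
  calc ∑ i ∈ S, (mu hG i - mu hH i)
      ≤ ∑ i ∈ S, ((mu hHP i + c) - mu hH i) :=
        Finset.sum_le_sum fun i _ => sub_le_sub_right (step1 i) _
    _ = ∑ i ∈ S, (mu hHP i - mu hH i) + k * c := by
        rw [Finset.sum_congr rfl (fun i _ =>
          (by ring : (mu hHP i + c) - mu hH i = (mu hHP i - mu hH i) + c)),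
          Finset.sum_add_distrib, Finset.sum_const, hS, nsmul_eq_mul]
    _ ≤ ∑ i, (mu hHP i - mu hH i) + k * c := by
        refine add_le_add_left (Finset.sum_le_sum_of_subset_of_nonneg (Finset.subset_univ S) ?_) _
        intro i _ _
        exact sub_nonneg.2 (step2 i)
    _ = ∑ l ∈ Finset.Iic kk, (mu hGH l - c) + k * c := by rw [step3, step4]
    _ = ∑ l ∈ Finset.Iic kk, mu hGH l := by
        rw [Finset.sum_sub_distrib, Finset.sum_const, cardIic, nsmul_eq_mul]
        ring

/-! ### SVD -/

open scoped ComplexOrder in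
/-- vectors orthogonal to a fixed vector -/
noncomputable def orthoSpace (wv : Fin N → ℂ) : Submodule ℂ (Fin N → ℂ) where
  carrier := {x | star x ⬝ᵥ wv = 0}
  add_mem' := by
    intro a b ha hb
    simp only [Set.mem_setOf_eq] at *
    rw [star_add, add_dotProduct, ha, hb, add_zero]
  zero_mem' := by simp [dotProduct]
  smul_mem' := by
    intro c x hx
    simp only [Set.mem_setOf_eq] at *
    rw [star_smul, smul_dotProduct, hx, smul_zero]

open scoped ComplexOrder in
lemma svd_exists {n : ℕ} (C : Matrix (Fin n) (Fin n) ℂ) :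
    ∃ w : Fin n → (Fin n → ℂ),
      (∀ i j, star (w i) ⬝ᵥ w j = if i = j then 1 else 0) ∧
      (∀ i, C *ᵥ Bfam (Matrix.isHermitian_conjTranspose_mul_self C) i
        = ((Real.sqrt (mu (Matrix.isHermitian_conjTranspose_mul_self C) i) : ℝ) : ℂ) • w i) ∧
      (∀ i, Cᴴ *ᵥ w i
        = ((Real.sqrt (mu (Matrix.isHermitian_conjTranspose_mul_self C) i) : ℝ) : ℂ)
          • Bfam (Matrix.isHermitian_conjTranspose_mul_self C) i) := by
  classical
  set hCC := Matrix.isHermitian_conjTranspose_mul_self C with hCCdef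
  set v : Fin n → (Fin n → ℂ) := Bfam hCC with hv
  set msq : Fin n → ℝ := mu hCC with hmsq
  set sv : Fin n → ℝ := fun i => Real.sqrt (msq i) with hsv
  have hmu0 : ∀ i, 0 ≤ msq i := fun i =>
    Matrix.eigenvalues_conjTranspose_mul_self_nonneg C _
  have hs0 : ∀ i, 0 ≤ sv i := fun i => Real.sqrt_nonneg _
  have hs2 : ∀ i, sv i ^ 2 = msq i := fun i => Real.sq_sqrt (hmu0 i)
  have hCv : ∀ i, (Cᴴ * C) *ᵥ v i = ((msq i : ℝ) : ℂ) • v i := fun i => Bfam_eig hCC i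
  have d1 : ∀ i j, star (C *ᵥ v i) ⬝ᵥ (C *ᵥ v j)
      = ((msq j : ℝ) : ℂ) * (if i = j then 1 else 0) := by
    intro i j
    rw [Matrix.star_mulVec, ← Matrix.dotProduct_mulVec, Matrix.mulVec_mulVec, hCv j,
      dotProduct_smul, smul_eq_mul, Bfam_ortho hCC]
  -- the index set where the singular value is nonzero
  have hsq : ∀ j, Real.sqrt (msq j) = sv j := fun j => rfl
  set SF : Finset (Fin n) := Finset.univ.filter (fun i => msq i ≠ 0) with hSF
  -- candidate left singular vectors
  set w₀ : Fin n → (Fin n → ℂ) := fun i => (((sv i : ℝ) : ℂ))⁻¹ • (C *ᵥ v i) with hw₀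
  have d2 : ∀ i j, star (w₀ i) ⬝ᵥ w₀ j
      = (((sv i : ℝ) : ℂ))⁻¹ * (((sv j : ℝ) : ℂ))⁻¹ * ((msq j : ℝ) : ℂ)
        * (if i = j then 1 else 0) := by
    intro i j
    rw [hw₀]
    simp only [star_smul, smul_dotProduct, dotProduct_smul, d1 i j]
    rw [star_inv₀]
    have : star (((sv i : ℝ) : ℂ)) = ((sv i : ℝ) : ℂ) := by
      rw [Complex.star_def, Complex.conj_ofReal]
    rw [this]
    simp only [smul_eq_mul]
    ring
  have d2' : ∀ i j, i ∈ SF → star (w₀ i) ⬝ᵥ w₀ j = if i = j then 1 else 0 := by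
    intro i j hi
    rw [d2 i j]
    by_cases h : i = j
    · subst h
      have hmne : msq i ≠ 0 := (Finset.mem_filter.1 hi).2
      have hsne : sv i ≠ 0 := by
        intro h0
        apply hmne
        rw [← hs2 i, h0]; ring
      have hcne : ((sv i : ℝ) : ℂ) ≠ 0 := by exact_mod_cast hsne
      simp only [if_pos rfl, mul_one]
      rw [show ((msq i : ℝ) : ℂ) = ((sv i : ℝ) : ℂ) * ((sv i : ℝ) : ℂ) by
        rw [← Complex.ofReal_mul]; norm_cast; rw [← hs2 i]; ring]
      field_simp
    · simp [h]
  -- orthonormality of the restricted family in Euclidean space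
  have hortho : Orthonormal ℂ ((SF : Set (Fin n)).restrict
      (fun i => (WithLp.equiv 2 (Fin n → ℂ)).symm (w₀ i))) := by
    rw [orthonormal_iff_ite]
    intro i j
    rw [EuclideanSpace.inner_eq_star_dotProduct]
    have := d2' i j (by exact_mod_cast i.2)
    rw [dotProduct_comm]
    change star (w₀ ↑i) ⬝ᵥ w₀ ↑j = _
    rw [this]
    simp [Subtype.coe_inj]
  obtain ⟨b, hb⟩ := hortho.exists_orthonormalBasis_extension_of_card_eq
    (by rw [finrank_euclideanSpace, Fintype.card_fin])
  set w : Fin n → (Fin n → ℂ) := fun i => (WithLp.equiv 2 (Fin n → ℂ)) (b i) with hwdef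
  have hworth : ∀ i j, star (w i) ⬝ᵥ w j = if i = j then 1 else 0 := by
    intro i j
    have h := orthonormal_iff_ite.1 b.orthonormal i j
    rw [EuclideanSpace.inner_eq_star_dotProduct, dotProduct_comm] at h
    exact h
  have hwS : ∀ i ∈ SF, w i = w₀ i := by
    intro i hi
    have h1 := hb i (by exact_mod_cast hi)
    calc w i = (WithLp.equiv 2 (Fin n → ℂ)) (b i) := rfl
      _ = (WithLp.equiv 2 (Fin n → ℂ)) ((WithLp.equiv 2 (Fin n → ℂ)).symm (w₀ i)) := by rw [h1]
      _ = w₀ i := (WithLp.equiv 2 (Fin n → ℂ)).apply_symm_apply _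
  -- zero singular value implies C *ᵥ v i = 0
  have hCv0 : ∀ i, i ∉ SF → C *ᵥ v i = 0 := by
    intro i hi
    have hmz : msq i = 0 := by
      by_contra h
      exact hi (Finset.mem_filter.2 ⟨Finset.mem_univ i, h⟩)
    have := d1 i i
    rw [if_pos rfl, mul_one, hmz] at this
    have h0 : star (C *ᵥ v i) ⬝ᵥ (C *ᵥ v i) = 0 := by rw [this]; simp
    exact dotProduct_star_self_eq_zero.1 h0
  have hsz : ∀ i, i ∉ SF → sv i = 0 := by
    intro i hi
    have hmz : msq i = 0 := by
      by_contra h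
      exact hi (Finset.mem_filter.2 ⟨Finset.mem_univ i, h⟩)
    rw [hsv]; simp [hmz]
  -- the main rank/orthogonality argument : Cᴴ *ᵥ w i = 0 off SF
  have hrank : ∀ i, i ∉ SF → Cᴴ *ᵥ w i = 0 := by
    intro i hi
    -- span of w over SF equals range of mulVecLin C
    have hKfin : Module.finrank ℂ
        (Submodule.span ℂ (Set.range (fun t : ↥SF => w ↑t))) = SF.card :=
      finrank_restrict_span hworth SF
    have hcard : SF.card = C.rank := by
      have h1 : C.rank = (Cᴴ * C).rank := (Matrix.rank_conjTranspose_mul_self C).symm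
      have h2 : (Cᴴ * C).rank = Fintype.card {j // hCC.eigenvalues j ≠ 0} :=
        hCC.rank_eq_card_non_zero_eigs
      have h3 : Fintype.card {j // msq j ≠ 0} = Fintype.card {j // hCC.eigenvalues j ≠ 0} :=
        Fintype.card_congr (Equiv.subtypeEquiv (sperm hCC) (fun a => by
          rw [hmsq]; exact Iff.rfl))
      have h4 : SF.card = Fintype.card {j // msq j ≠ 0} := by
        rw [hSF]
        rw [Fintype.card_subtype]
      omega
    have hKle : Submodule.span ℂ (Set.range (fun t : ↥SF => w ↑t))
        ≤ LinearMap.range (Matrix.mulVecLin C) := by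
      rw [Submodule.span_le]
      rintro x ⟨t, rfl⟩
      refine ⟨(((sv ↑t : ℝ) : ℂ))⁻¹ • v ↑t, ?_⟩
      show Matrix.mulVecLin C ((((sv ↑t : ℝ) : ℂ))⁻¹ • v ↑t) = w ↑t
      rw [Matrix.mulVecLin_apply, Matrix.mulVec_smul, hwS _ t.2]
    have hKeq : Submodule.span ℂ (Set.range (fun t : ↥SF => w ↑t))
        = LinearMap.range (Matrix.mulVecLin C) := by
      refine Submodule.eq_of_le_of_finrank_le hKle ?_
      rw [hKfin, hcard]
      exact le_of_eq rfl
    -- everything in the range is orthogonal to w i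
    have hOle : LinearMap.range (Matrix.mulVecLin C) ≤ orthoSpace (w i) := by
      rw [← hKeq, Submodule.span_le]
      rintro x ⟨t, rfl⟩
      have : (t : Fin n) ≠ i := by
        intro h
        exact hi (h ▸ t.2)
      have h := hworth ↑t i
      rw [if_neg this] at h
      exact h
    have hperp : ∀ y : Fin n → ℂ, star (C *ᵥ y) ⬝ᵥ w i = 0 := by
      intro y
      exact hOle ⟨y, rfl⟩
    have key : ∀ y : Fin n → ℂ, star y ⬝ᵥ (Cᴴ *ᵥ w i) = 0 := by
      intro y
      rw [Matrix.dotProduct_mulVec, ← Matrix.star_mulVec]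
      exact hperp y
    have := key (Cᴴ *ᵥ w i)
    exact dotProduct_star_self_eq_zero.1 this
  refine ⟨w, hworth, ?_, ?_⟩
  · intro i
    rw [hsq i]
    by_cases hi : i ∈ SF
    · have hmne : msq i ≠ 0 := (Finset.mem_filter.1 hi).2
      have hsne : sv i ≠ 0 := by
        intro h0; apply hmne; rw [← hs2 i, h0]; ring
      have hcne : ((sv i : ℝ) : ℂ) ≠ 0 := by exact_mod_cast hsne
      rw [hwS i hi]
      simp only [hw₀]
      rw [smul_smul, mul_inv_cancel₀ hcne, one_smul]
    · rw [hCv0 i hi, hsz i hi]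
      simp
  · intro i
    rw [hsq i]
    by_cases hi : i ∈ SF
    · have hmne : msq i ≠ 0 := (Finset.mem_filter.1 hi).2
      have hsne : sv i ≠ 0 := by
        intro h0; apply hmne; rw [← hs2 i, h0]; ring
      have hcne : ((sv i : ℝ) : ℂ) ≠ 0 := by exact_mod_cast hsne
      rw [hwS i hi]
      simp only [hw₀]
      rw [Matrix.mulVec_smul, Matrix.mulVec_mulVec, hCv i, smul_smul]
      congr 1
      rw [show ((msq i : ℝ) : ℂ) = ((sv i : ℝ) : ℂ) * ((sv i : ℝ) : ℂ) by
        rw [← Complex.ofReal_mul]; norm_cast; rw [← hs2 i]; ring]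
      field_simp
    · rw [hrank i hi, hsz i hi]
      simp

/-! ### Hermitian dilation -/

variable {n : ℕ}

/-- sorted singular values -/
noncomputable def sC (C : Matrix (Fin n) (Fin n) ℂ) : Fin n → ℝ := fun i =>
  Real.sqrt (mu (Matrix.isHermitian_conjTranspose_mul_self C) i)

lemma sC_nonneg (C : Matrix (Fin n) (Fin n) ℂ) (i : Fin n) : 0 ≤ sC C i :=
  Real.sqrt_nonneg _

lemma sC_antitone (C : Matrix (Fin n) (Fin n) ℂ) : Antitone (sC C) := fun i j hij =>
  Real.sqrt_le_sqrt (mu_antitone _ hij)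

/-- Hermitian dilation of a square matrix -/
noncomputable def Jmat (C : Matrix (Fin n) (Fin n) ℂ) : Matrix (Fin (n + n)) (Fin (n + n)) ℂ :=
  (Matrix.fromBlocks 0 C Cᴴ 0).submatrix (finSumFinEquiv.symm) (finSumFinEquiv.symm)

lemma Jmat_herm (C : Matrix (Fin n) (Fin n) ℂ) : (Jmat C).IsHermitian := by
  unfold Jmat Matrix.IsHermitian
  rw [Matrix.conjTranspose_submatrix, Matrix.fromBlocks_conjTranspose]
  simp

lemma Jmat_sub (A B : Matrix (Fin n) (Fin n) ℂ) : Jmat A - Jmat (-B) = Jmat (A + B) := by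
  ext i j
  simp only [Jmat, Matrix.sub_apply, Matrix.submatrix_apply]
  cases hsi : finSumFinEquiv.symm i <;> cases hsj : finSumFinEquiv.symm j <;>
    simp [Matrix.fromBlocks, Matrix.conjTranspose_apply] <;> ring

lemma symm_of_lt {l : Fin (n + n)} (h : (l : ℕ) < n) :
    finSumFinEquiv.symm l = Sum.inl ⟨l, h⟩ := by
  rw [Equiv.symm_apply_eq, finSumFinEquiv_apply_left]
  ext
  simp

lemma symm_of_ge {l : Fin (n + n)} (h : n ≤ (l : ℕ)) :
    finSumFinEquiv.symm l = Sum.inr ⟨l - n, by have := l.isLt; omega⟩ := by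
  rw [Equiv.symm_apply_eq, finSumFinEquiv_apply_right]
  ext
  simp
  omega

/-- glueing two vectors -/
noncomputable def glue (p q : Fin n → ℂ) : Fin (n + n) → ℂ := fun r =>
  Sum.elim p q (finSumFinEquiv.symm r)

lemma glue_dot (p q p' q' : Fin n → ℂ) :
    star (glue p q) ⬝ᵥ glue p' q' = star p ⬝ᵥ p' + star q ⬝ᵥ q' := by
  unfold glue dotProduct
  rw [← Equiv.sum_comp finSumFinEquiv
    (fun r => (star (fun r => Sum.elim p q (finSumFinEquiv.symm r)) r
      * Sum.elim p' q' (finSumFinEquiv.symm r)))]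
  rw [Fintype.sum_sum_type]
  have h2 : ∀ x : Fin n, finSumFinEquiv.symm (x.addNat n) = Sum.inr x := by
    intro x
    rw [symm_of_ge (by simp)]
    congr 1
    ext
    simp
  simp [h2]

lemma glue_smul (c : ℂ) (p q : Fin n → ℂ) : glue (c • p) (c • q) = c • glue p q := by
  funext r
  unfold glue
  cases h : finSumFinEquiv.symm r <;> simp [h]

lemma glue_comp_equiv (p q : Fin n → ℂ) :
    (glue p q) ∘ ⇑finSumFinEquiv = Sum.elim p q := by
  funext x
  simp [glue]

lemma Jmat_mulVec_glue (C : Matrix (Fin n) (Fin n) ℂ) (p q : Fin n → ℂ) :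
    Jmat C *ᵥ glue p q = glue (C *ᵥ q) (Cᴴ *ᵥ p) := by
  unfold Jmat
  have h := Matrix.submatrix_mulVec_equiv (Matrix.fromBlocks 0 C Cᴴ 0) (glue p q)
    (⇑finSumFinEquiv.symm) finSumFinEquiv.symm
  rw [h]
  funext r
  have h2 : (glue p q) ∘ ⇑(finSumFinEquiv.symm).symm = Sum.elim p q := by
    rw [Equiv.symm_symm]; exact glue_comp_equiv p q
  rw [h2]
  rw [Function.comp_apply, Matrix.fromBlocks_mulVec]
  unfold glue
  cases h3 : finSumFinEquiv.symm r <;> simp [h3]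

/-- the sorted eigenvalues of the dilation -/
lemma mu_Jmat (C : Matrix (Fin n) (Fin n) ℂ) (hJ : (Jmat C).IsHermitian) (l : Fin (n + n)) :
    mu hJ l = Sum.elim (fun i => sC C i) (fun i => - sC C i.rev) (finSumFinEquiv.symm l) := by
  classical
  obtain ⟨w, hworth, hCw, hCHw⟩ := svd_exists C
  set v : Fin n → (Fin n → ℂ) := Bfam (Matrix.isHermitian_conjTranspose_mul_self C) with hv
  have hvorth := Bfam_ortho (Matrix.isHermitian_conjTranspose_mul_self C)
  set s : Fin n → ℝ := sC C with hsdef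
  have hr2 : ((Real.sqrt 2 : ℝ) : ℂ)⁻¹ * ((Real.sqrt 2 : ℝ) : ℂ)⁻¹ = (2 : ℂ)⁻¹ := by
    rw [← mul_inv, ← Complex.ofReal_mul, Real.mul_self_sqrt (by norm_num)]
    norm_num
  set r2 : ℂ := ((Real.sqrt 2 : ℝ) : ℂ)⁻¹ with hr2def
  have hr2star : star r2 = r2 := by
    rw [hr2def, star_inv₀, Complex.star_def, Complex.conj_ofReal]
  set zs : Fin n ⊕ Fin n → (Fin (n + n) → ℂ) :=
    Sum.elim (fun i => r2 • glue (w i) (v i)) (fun i => r2 • glue (-(w i.rev)) (v i.rev))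
    with hzs
  set ds : Fin n ⊕ Fin n → ℝ := Sum.elim (fun i => s i) (fun i => - s i.rev) with hds
  have hzsorth : ∀ x y, star (zs x) ⬝ᵥ zs y = if x = y then 1 else 0 := by
    intro x y
    have base : ∀ p q p' q' : Fin n → ℂ,
        star (r2 • glue p q) ⬝ᵥ (r2 • glue p' q')
          = (2:ℂ)⁻¹ * (star p ⬝ᵥ p' + star q ⬝ᵥ q') := by
      intro p q p' q'
      rw [star_smul, smul_dotProduct, dotProduct_smul, hr2star, glue_dot]
      rw [smul_eq_mul, smul_eq_mul, ← mul_assoc, hr2]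
    cases x with
    | inl i =>
      cases y with
      | inl j =>
        rw [hzs]
        simp only [Sum.elim_inl]
        rw [base, hworth, hvorth]
        by_cases h : i = j <;> simp [h] <;> norm_num
      | inr j =>
        rw [hzs]
        simp only [Sum.elim_inl, Sum.elim_inr]
        rw [base]
        have : star (w i) ⬝ᵥ (-(w j.rev)) = - (star (w i) ⬝ᵥ w j.rev) := by
          rw [dotProduct_neg]
        rw [this, hworth, hvorth]
        by_cases h : i = j.rev <;> simp [h]
    | inr i =>
      cases y with
      | inl j =>
        rw [hzs]
        simp only [Sum.elim_inl, Sum.elim_inr]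
        rw [base]
        have : star (-(w i.rev)) ⬝ᵥ w j = - (star (w i.rev) ⬝ᵥ w j) := by
          rw [star_neg, neg_dotProduct]
        rw [this, hworth, hvorth]
        by_cases h : i.rev = j <;> simp [h]
      | inr j =>
        rw [hzs]
        simp only [Sum.elim_inr]
        rw [base]
        have : star (-(w i.rev)) ⬝ᵥ (-(w j.rev)) = star (w i.rev) ⬝ᵥ w j.rev := by
          rw [star_neg, neg_dotProduct, dotProduct_neg, neg_neg]
        rw [this, hworth, hvorth]
        have hrevinj : i.rev = j.rev ↔ i = j := by
          constructor
          · intro h; exact Fin.rev_injective h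
          · intro h; rw [h]
        by_cases h : i = j
        · simp [h]; norm_num
        · simp [hrevinj, h]
  have hzseig : ∀ x, Jmat C *ᵥ zs x = ((ds x : ℝ) : ℂ) • zs x := by
    intro x
    cases x with
    | inl i =>
      rw [hzs, hds]
      simp only [Sum.elim_inl]
      rw [Matrix.mulVec_smul, Jmat_mulVec_glue, hCw i, hCHw i]
      rw [show ((Real.sqrt (mu (Matrix.isHermitian_conjTranspose_mul_self C) i) : ℝ) : ℂ)
          = ((s i : ℝ) : ℂ) from rfl]
      rw [glue_smul, smul_comm]
    | inr i =>
      rw [hzs, hds]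
      simp only [Sum.elim_inr]
      have hs : ((Real.sqrt (mu (Matrix.isHermitian_conjTranspose_mul_self C) i.rev) : ℝ) : ℂ)
          = ((s i.rev : ℝ) : ℂ) := rfl
      have lhs_eq : Jmat C *ᵥ (r2 • glue (-(w i.rev)) (v i.rev))
          = r2 • glue (((s i.rev : ℝ) : ℂ) • w i.rev) (-(((s i.rev : ℝ) : ℂ) • v i.rev)) := by
        rw [Matrix.mulVec_smul, Jmat_mulVec_glue, Matrix.mulVec_neg, hCHw i.rev, hCw i.rev, hs]
      rw [lhs_eq]
      have rhs_eq : (((- s i.rev : ℝ)) : ℂ) • (r2 • glue (-(w i.rev)) (v i.rev))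
          = r2 • glue (((s i.rev : ℝ) : ℂ) • w i.rev) (-(((s i.rev : ℝ) : ℂ) • v i.rev)) := by
        have c1 : ((- s i.rev : ℝ) : ℂ) • (-(w i.rev)) = ((s i.rev : ℝ) : ℂ) • w i.rev := by
          push_cast
          rw [neg_smul, smul_neg, neg_neg]
        have c2 : ((- s i.rev : ℝ) : ℂ) • (v i.rev) = -(((s i.rev : ℝ) : ℂ) • v i.rev) := by
          push_cast
          rw [neg_smul]
        rw [smul_comm, ← glue_smul, c1, c2]
      rw [rhs_eq]
  have hdsanti : Antitone (fun l : Fin (n + n) => ds (finSumFinEquiv.symm l)) := by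
    intro l₁ l₂ h12
    show ds (finSumFinEquiv.symm l₂) ≤ ds (finSumFinEquiv.symm l₁)
    have h12' : (l₁ : ℕ) ≤ (l₂ : ℕ) := Fin.le_def.1 h12
    rcases lt_or_ge ((l₁ : ℕ)) n with h1 | h1 <;> rcases lt_or_ge ((l₂ : ℕ)) n with h2 | h2
    · rw [symm_of_lt h1, symm_of_lt h2, hds]
      simp only [Sum.elim_inl]
      exact sC_antitone C (Fin.mk_le_mk.2 h12')
    · rw [symm_of_lt h1, symm_of_ge h2, hds]
      simp only [Sum.elim_inl, Sum.elim_inr]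
      have a1 := sC_nonneg C (⟨l₁, h1⟩ : Fin n)
      have a2 := sC_nonneg C (Fin.rev ⟨(l₂ : ℕ) - n, by have := l₂.isLt; omega⟩)
      linarith
    · omega
    · rw [symm_of_ge h1, symm_of_ge h2, hds]
      simp only [Sum.elim_inr]
      have hrev : Fin.rev (⟨(l₂ : ℕ) - n, by have := l₂.isLt; omega⟩ : Fin n)
          ≤ Fin.rev (⟨(l₁ : ℕ) - n, by have := l₁.isLt; omega⟩ : Fin n) := by
        rw [Fin.rev_le_rev]
        exact Fin.mk_le_mk.2 (by omega)
      have := sC_antitone C hrev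
      linarith
  have := mu_ident hJ (fun l => zs (finSumFinEquiv.symm l))
    (fun l => ds (finSumFinEquiv.symm l))
    (fun a b => by
      rw [hzsorth]
      by_cases h : finSumFinEquiv.symm a = finSumFinEquiv.symm b
      · rw [if_pos h, if_pos (finSumFinEquiv.symm.injective h)]
      · rw [if_neg h, if_neg (fun hc => h (by rw [hc]))])
    (fun l => hzseig _) hdsanti l
  rw [this]

lemma mu_Jmat_lt (C : Matrix (Fin n) (Fin n) ℂ) (hJ : (Jmat C).IsHermitian)
    {l : Fin (n + n)} (h : (l : ℕ) < n) : mu hJ l = sC C ⟨l, h⟩ := by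
  rw [mu_Jmat C hJ l, symm_of_lt h]
  simp

lemma mu_Jmat_ge (C : Matrix (Fin n) (Fin n) ℂ) (hJ : (Jmat C).IsHermitian)
    {l : Fin (n + n)} (h : n ≤ (l : ℕ)) :
    mu hJ l = - sC C (Fin.rev ⟨(l : ℕ) - n, by have := l.isLt; omega⟩) := by
  rw [mu_Jmat C hJ l, symm_of_ge h]
  simp

lemma mu_congr {M₁ M₂ : Matrix (Fin N) (Fin N) ℂ} (h : M₁ = M₂)
    (h₁ : M₁.IsHermitian) (h₂ : M₂.IsHermitian) : mu h₁ = mu h₂ := by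
  subst h
  rfl

lemma sC_neg (B : Matrix (Fin n) (Fin n) ℂ) : sC (-B) = sC B := by
  have h : (-B)ᴴ * (-B) = Bᴴ * B := by
    rw [Matrix.conjTranspose_neg, Matrix.neg_mul, Matrix.mul_neg, neg_neg]
  funext i
  unfold sC
  rw [mu_congr h (Matrix.isHermitian_conjTranspose_mul_self (-B))
    (Matrix.isHermitian_conjTranspose_mul_self B)]

end SVP

/-- `sval M i` is the `i`-th largest singular value (0-indexed) of the complex matrix `M`:
the square roots of the eigenvalues of `Mᴴ * M`, in decreasing order. -/
noncomputable def sval {m n : ℕ} (M : Matrix (Fin m) (Fin n) ℂ) (i : Fin n) : ℝ :=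
  Real.sqrt ((Matrix.isHermitian_conjTranspose_mul_self M).eigenvalues
    (Tuple.sort (Matrix.isHermitian_conjTranspose_mul_self M).eigenvalues i.rev))

lemma sval_eq_sC {n : ℕ} (M : Matrix (Fin n) (Fin n) ℂ) (i : Fin n) :
    sval M i = SVP.sC M i := rfl

theorem stmt_8 {n : ℕ} (A B : Matrix (Fin n) (Fin n) ℂ) (k : ℕ) (hk1 : 1 ≤ k) (hk : k ≤ n)
    (hne : ((Finset.univ : Finset (Fin n)).powersetCard k).Nonempty) :
    ∑ i : Fin k, sval (A + B) (Fin.castLE hk i) ≥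
      ((Finset.univ : Finset (Fin n)).powersetCard k).sup' hne
        (fun t => ∑ i ∈ t, |sval A i - sval B i|) := by
  classical
  rw [ge_iff_le, Finset.sup'_le_iff]
  intro t ht
  have htc : t.card = k := (Finset.mem_powersetCard.1 ht).2
  have hn1 : 1 ≤ n := le_trans hk1 hk
  have hG : (SVP.Jmat A).IsHermitian := SVP.Jmat_herm A
  have hH : (SVP.Jmat (-B)).IsHermitian := SVP.Jmat_herm (-B)
  have hGHeq : SVP.Jmat A - SVP.Jmat (-B) = SVP.Jmat (A + B) := SVP.Jmat_sub A B
  have hJ : (SVP.Jmat (A + B)).IsHermitian := SVP.Jmat_herm (A + B)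
  have hGH : (SVP.Jmat A - SVP.Jmat (-B)).IsHermitian := by rw [hGHeq]; exact hJ
  set φ : Fin n → Fin (n + n) := fun i =>
    if sval B i ≤ sval A i then (⟨(i : ℕ), by have := i.isLt; omega⟩ : Fin (n + n))
    else (⟨n + n - 1 - (i : ℕ), by have := i.isLt; omega⟩ : Fin (n + n)) with hφ
  have hφval : ∀ x : Fin n,
      ((φ x : Fin (n + n)) : ℕ) = if sval B x ≤ sval A x then (x : ℕ)
        else n + n - 1 - (x : ℕ) := by
    intro x
    rw [hφ]
    split_ifs with h <;> simp [h]
  have hφinj : Function.Injective φ := by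
    intro a b hab
    have h1 := congrArg Fin.val hab
    rw [hφval a, hφval b] at h1
    have hav := a.isLt
    have hbv := b.isLt
    apply Fin.ext
    split_ifs at h1 <;> omega
  have key : ∀ i : Fin n, SVP.mu hG (φ i) - SVP.mu hH (φ i) = |sval A i - sval B i| := by
    intro i
    have hiv := i.isLt
    have hBneg : ∀ j : Fin n, SVP.sC (-B) j = sval B j := by
      intro j
      rw [SVP.sC_neg, sval_eq_sC]
    by_cases hc : sval B i ≤ sval A i
    · have hφi : φ i = (⟨(i : ℕ), by omega⟩ : Fin (n + n)) := by
        rw [hφ]; simp [hc]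
      have hlt : ((⟨(i : ℕ), by omega⟩ : Fin (n + n)) : ℕ) < n := hiv
      have e1 : SVP.mu hG (⟨(i : ℕ), by omega⟩ : Fin (n + n)) = sval A i := by
        rw [SVP.mu_Jmat_lt A hG hlt, ← sval_eq_sC]
      have e2 : SVP.mu hH (⟨(i : ℕ), by omega⟩ : Fin (n + n)) = sval B i := by
        rw [SVP.mu_Jmat_lt (-B) hH hlt, hBneg]
      rw [hφi, e1, e2, abs_of_nonneg (by linarith)]
    · have hφi : φ i = (⟨n + n - 1 - (i : ℕ), by omega⟩ : Fin (n + n)) := by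
        rw [hφ]; simp [hc]
      have hge : n ≤ ((⟨n + n - 1 - (i : ℕ), by omega⟩ : Fin (n + n)) : ℕ) := by
        show n ≤ n + n - 1 - (i : ℕ)
        omega
      have hrev : Fin.rev (⟨((⟨n + n - 1 - (i : ℕ), by omega⟩ : Fin (n + n)) : ℕ) - n,
          by omega⟩ : Fin n) = i := by
        apply Fin.ext
        rw [Fin.val_rev]
        show n - ((n + n - 1 - (i : ℕ) - n) + 1) = (i : ℕ)
        omega
      have e1 : SVP.mu hG (⟨n + n - 1 - (i : ℕ), by omega⟩ : Fin (n + n)) = - sval A i := by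
        rw [SVP.mu_Jmat_ge A hG hge, hrev, ← sval_eq_sC]
      have e2 : SVP.mu hH (⟨n + n - 1 - (i : ℕ), by omega⟩ : Fin (n + n)) = - sval B i := by
        rw [SVP.mu_Jmat_ge (-B) hH hge, hrev, hBneg]
      rw [hφi, e1, e2, abs_of_nonpos (by linarith)]
      ring
  have hScard : (t.image φ).card = k := by
    rw [Finset.card_image_of_injective t hφinj, htc]
  have hlid := SVP.lidskii hG hH hGH hk1 (by omega : k ≤ n + n) hScard
  have hsum1 : ∑ j ∈ t.image φ, (SVP.mu hG j - SVP.mu hH j)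
      = ∑ i ∈ t, |sval A i - sval B i| := by
    rw [Finset.sum_image (fun a _ b _ h => hφinj h)]
    exact Finset.sum_congr rfl fun i _ => key i
  have hsum2 : ∑ l ∈ Finset.Iic (⟨k - 1, by omega⟩ : Fin (n + n)), SVP.mu hGH l
      = ∑ i : Fin k, sval (A + B) (Fin.castLE hk i) := by
    refine Finset.sum_nbij' (fun l => (⟨(l : ℕ) % k, Nat.mod_lt _ (by omega)⟩ : Fin k))
      (fun i => (⟨(i : ℕ), by have := i.isLt; omega⟩ : Fin (n + n))) ?_ ?_ ?_ ?_ ?_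
    · intro a _
      exact Finset.mem_univ _
    · intro a _
      rw [Finset.mem_Iic, Fin.le_def]
      show (a : ℕ) ≤ k - 1
      have := a.isLt
      omega
    · intro a ha
      rw [Finset.mem_Iic, Fin.le_def] at ha
      have hak : (a : ℕ) ≤ k - 1 := ha
      apply Fin.ext
      show (a : ℕ) % k = (a : ℕ)
      exact Nat.mod_eq_of_lt (by omega)
    · intro a _
      apply Fin.ext
      show (a : ℕ) % k = (a : ℕ)
      exact Nat.mod_eq_of_lt a.isLt
    · intro a ha
      rw [Finset.mem_Iic, Fin.le_def] at ha
      have hak : (a : ℕ) ≤ k - 1 := ha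
      have haln : (a : ℕ) < n := by omega
      have e0 : SVP.mu hGH a = SVP.mu hJ a := by
        rw [SVP.mu_congr hGHeq hGH hJ]
      rw [e0, SVP.mu_Jmat_lt (A + B) hJ haln, ← sval_eq_sC]
      congr 1
      apply Fin.ext
      show (a : ℕ) = (a : ℕ) % k
      rw [Nat.mod_eq_of_lt (by omega)]
  calc ∑ i ∈ t, |sval A i - sval B i|
      = ∑ j ∈ t.image φ, (SVP.mu hG j - SVP.mu hH j) := hsum1.symm
    _ ≤ ∑ l ∈ Finset.Iic (⟨k - 1, by omega⟩ : Fin (n + n)), SVP.mu hGH l := hlid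
    _ = ∑ i : Fin k, sval (A + B) (Fin.castLE hk i) := hsum2
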